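/- For i ∈ ℤ, let A_i denote the annulus {x ∈ ℝ² : 2^{i−1} ≤ ‖x‖ < 2^i}, where ‖·‖ is the Euclidean norm. There exists a finite constant C such that for all α > 0, all i, j ∈ ℤ, and all Lebesgue measurable sets E, F ⊂ ℝ², ∫_{ℝ²} ∫_{ℝ²} χ_{{|s₁t₂ − s₂t₁| ≤ α}}(s,t) · χ_{E ∩ A_i}(s) χ_{F ∩ A_j}(t) ds dt ≤ C α · min{ 2^{i−j} |F ∩ A_j|, 2^{j−i} |E ∩ A_i| }. -/

import Mathlib

/-!
For `s ≠ 0`, the linear map `t ↦ (det (s, t), ⟪s, t⟫)` has determinant `-‖s‖²` and sends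
`{t : |det (s, t)| ≤ α, ‖t‖ ≤ R}` into the rectangle `[-α, α] × [-‖s‖R, ‖s‖R]`, so this strip has
measure at most `4αR / ‖s‖`. For `s ∈ A_i` and `R = 2^j` that is `≤ 8α 2^(j-i)`; integrating over
`s ∈ E ∩ A_i` gives the second term of the minimum, and the first follows from the symmetry
`|det (s, t)| = |det (t, s)|` and Tonelli.
-/

open MeasureTheory Set
open scoped ENNReal NNReal

def Ann2 (i : ℤ) : Set (EuclideanSpace ℝ (Fin 2)) :=
  {x | (2 : ℝ) ^ (i - 1) ≤ ‖x‖ ∧ ‖x‖ < (2 : ℝ) ^ i}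

local notation "ℝ²" => EuclideanSpace ℝ (Fin 2)

lemma volume_setOf_abs_le_and_abs_le (a b : ℝ) :
    volume {u : ℝ² | |u 0| ≤ a ∧ |u 1| ≤ b} = ENNReal.ofReal (2 * a) * ENNReal.ofReal (2 * b) := by
  have hrect : {u : ℝ² | |u 0| ≤ a ∧ |u 1| ≤ b}
      = (MeasurableEquiv.toLp 2 (Fin 2 → ℝ)).symm ⁻¹' univ.pi ![Icc (-a) a, Icc (-b) b] := by
    ext u
    simp [Fin.forall_fin_two, abs_le]
  rw [hrect, (EuclideanSpace.volume_preserving_symm_measurableEquiv_toLp (Fin 2)).measure_preimage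
    (MeasurableSet.univ_pi fun i => by fin_cases i <;> exact measurableSet_Icc).nullMeasurableSet,
    volume_pi_pi, Fin.prod_univ_two]
  simp [Real.volume_Icc, two_mul]

def detInnerMap (v : ℝ²) : ℝ² →ₗ[ℝ] ℝ² := Matrix.toLpLin 2 2 !![-(v 1), v 0; v 0, v 1]

lemma detInnerMap_apply (v t : ℝ²) :
    detInnerMap v t 0 = v 0 * t 1 - v 1 * t 0 ∧ detInnerMap v t 1 = inner ℝ v t := by
  simp [detInnerMap, Matrix.toLpLin_apply, dotProduct, Fin.sum_univ_two,
    PiLp.inner_apply]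
  constructor <;> ring

lemma det_detInnerMap (v : ℝ²) : (detInnerMap v).det = -‖v‖ ^ 2 := by
  rw [detInnerMap, LinearMap.det_toLpLin, Matrix.det_fin_two_of, EuclideanSpace.real_norm_sq_eq,
    Fin.sum_univ_two]
  ring

lemma volume_strip_inter_closedBall_le {v : ℝ²} (hv : v ≠ 0) {α : ℝ} (hα : 0 ≤ α) (R : ℝ) :
    volume ({t : ℝ² | |v 0 * t 1 - v 1 * t 0| ≤ α} ∩ Metric.closedBall 0 R)
      ≤ ENNReal.ofReal (4 * α * R / ‖v‖) := by
  have hv' : 0 < ‖v‖ := norm_pos_iff.mpr hv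
  have hdet : (detInnerMap v).det ≠ 0 := by
    rw [det_detInnerMap]
    exact neg_ne_zero.mpr (by positivity)
  have hsub : {t : ℝ² | |v 0 * t 1 - v 1 * t 0| ≤ α} ∩ Metric.closedBall 0 R
      ⊆ detInnerMap v ⁻¹' {u | |u 0| ≤ α ∧ |u 1| ≤ ‖v‖ * R} := by
    rintro t ⟨hdt, ht⟩
    rw [mem_closedBall_zero_iff] at ht
    refine ⟨(detInnerMap_apply v t).1 ▸ hdt, (detInnerMap_apply v t).2 ▸ ?_⟩
    exact (abs_real_inner_le_norm v t).trans (by gcongr)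
  calc _ ≤ volume (detInnerMap v ⁻¹' {u | |u 0| ≤ α ∧ |u 1| ≤ ‖v‖ * R}) := measure_mono hsub
    _ = ENNReal.ofReal (‖v‖ ^ 2)⁻¹ *
          (ENNReal.ofReal (2 * α) * ENNReal.ofReal (2 * (‖v‖ * R))) := by
      rw [Measure.addHaar_preimage_linearMap _ hdet, volume_setOf_abs_le_and_abs_le,
        det_detInnerMap, abs_inv, abs_neg, abs_of_nonneg (by positivity)]
    _ ≤ ENNReal.ofReal (4 * α * R / ‖v‖) := by
      rw [← ENNReal.ofReal_mul (by positivity), ← ENNReal.ofReal_mul (by positivity)]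
      apply ENNReal.ofReal_le_ofReal (le_of_eq _)
      field_simp
      ring

lemma measurableSet_ann2 (i : ℤ) : MeasurableSet (Ann2 i) :=
  measurable_norm measurableSet_Ico

def detSublevel (α : ℝ) : Set (ℝ² × ℝ²) := {q | |q.1 0 * q.2 1 - q.1 1 * q.2 0| ≤ α}

lemma measurableSet_detSublevel (α : ℝ) : MeasurableSet (detSublevel α) :=
  measurableSet_le (by fun_prop) measurable_const

lemma swap_mem_detSublevel {α : ℝ} {s t : ℝ²} :
    (t, s) ∈ detSublevel α ↔ (s, t) ∈ detSublevel α := by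
  simp only [detSublevel, mem_ofPred_eq]
  rw [abs_sub_comm]
  ring_nf

noncomputable def detPairing (α : ℝ) (A B : Set ℝ²) : ℝ≥0∞ :=
  ∫⁻ s, ∫⁻ t, (detSublevel α).indicator 1 (s, t) * A.indicator 1 s * B.indicator 1 t

lemma detPairing_comm (α : ℝ) {A B : Set ℝ²} (hA : MeasurableSet A) (hB : MeasurableSet B) :
    detPairing α A B = detPairing α B A := by
  unfold detPairing
  rw [lintegral_lintegral_swap]
  · refine lintegral_congr fun t => lintegral_congr fun s => ?_
    by_cases h : (s, t) ∈ detSublevel α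
    · rw [indicator_of_mem h, indicator_of_mem (swap_mem_detSublevel.mpr h), Pi.one_apply,
        Pi.one_apply]
      ring
    · rw [indicator_of_notMem h, indicator_of_notMem (mt swap_mem_detSublevel.mp h)]
      ring
  · exact (((measurable_one.indicator (measurableSet_detSublevel α)).mul
      ((measurable_one.indicator hA).comp measurable_fst)).mul
      ((measurable_one.indicator hB).comp measurable_snd)).aemeasurable

lemma ofReal_two_zpow (n : ℤ) : ENNReal.ofReal ((2 : ℝ) ^ n) = 2 ^ n := by
  have h : (2 : ℝ) ^ n = ((2 : ℝ≥0) ^ n : ℝ≥0) := by push_cast; rfl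
  rw [h, ENNReal.ofReal_coe_nnreal, ENNReal.coe_zpow two_ne_zero]
  rfl

lemma lintegral_detSublevel_fibre_le {α : ℝ} (hα : 0 ≤ α) {i : ℤ} {s : ℝ²} (hs : s ∈ Ann2 i)
    (j : ℤ) (B : Set ℝ²) :
    ∫⁻ t, (detSublevel α).indicator 1 (s, t) * (B ∩ Ann2 j).indicator 1 t
      ≤ ENNReal.ofReal (8 * α * 2 ^ (j - i)) := by
  have hs0 : 0 < ‖s‖ := (zpow_pos two_pos _).trans_le hs.1
  calc _ = ∫⁻ t, (Prod.mk s ⁻¹' detSublevel α ∩ (B ∩ Ann2 j)).indicator 1 t := by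
        simp_rw [inter_indicator_one]; rfl
    _ ≤ volume (Prod.mk s ⁻¹' detSublevel α ∩ Metric.closedBall 0 (2 ^ j)) :=
        (lintegral_indicator_one_le _).trans <| measure_mono <|
          inter_subset_inter_right _ fun t ht => mem_closedBall_zero_iff.mpr ht.2.2.le
    _ ≤ ENNReal.ofReal (4 * α * 2 ^ j / ‖s‖) :=
        volume_strip_inter_closedBall_le (norm_pos_iff.mp hs0) hα _
    _ ≤ ENNReal.ofReal (8 * α * 2 ^ (j - i)) := by
        refine ENNReal.ofReal_le_ofReal ?_
        rw [div_le_iff₀ hs0]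
        calc 4 * α * 2 ^ j = 8 * α * 2 ^ (j - i) * 2 ^ (i - 1) := by
              rw [mul_assoc _ ((2 : ℝ) ^ _), ← zpow_add₀ two_ne_zero,
                show j - i + (i - 1) = j - 1 by ring, zpow_sub_one₀ two_ne_zero]
              ring
          _ ≤ 8 * α * 2 ^ (j - i) * ‖s‖ := by gcongr; exact hs.1

lemma detPairing_ann2_le {α : ℝ} (hα : 0 ≤ α) (i j : ℤ) (A B : Set ℝ²) :
    detPairing α (A ∩ Ann2 i) (B ∩ Ann2 j)
      ≤ ENNReal.ofReal (8 * α) * (2 ^ (j - i) * volume (A ∩ Ann2 i)) := by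
  calc _ ≤ ∫⁻ s, (A ∩ Ann2 i).indicator (fun _ => ENNReal.ofReal (8 * α * 2 ^ (j - i))) s := by
        refine lintegral_mono fun s => ?_
        by_cases hs : s ∈ A ∩ Ann2 i
        · simpa [indicator_of_mem hs] using lintegral_detSublevel_fibre_le hα hs.2 j B
        · simp [indicator_of_notMem hs]
    _ ≤ ENNReal.ofReal (8 * α * 2 ^ (j - i)) * volume (A ∩ Ann2 i) :=
        lintegral_indicator_const_le _ _
    _ = ENNReal.ofReal (8 * α) * (2 ^ (j - i) * volume (A ∩ Ann2 i)) := by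
        rw [ENNReal.ofReal_mul (p := 8 * α) (by positivity), ofReal_two_zpow, mul_assoc]

theorem statement13 :
    ∃ C : ℝ, 0 ≤ C ∧ ∀ α : ℝ, 0 < α → ∀ i j : ℤ,
      ∀ E F : Set (EuclideanSpace ℝ (Fin 2)), MeasurableSet E → MeasurableSet F →
      (∫⁻ s, ∫⁻ t,
          ({q : EuclideanSpace ℝ (Fin 2) × EuclideanSpace ℝ (Fin 2) |
              |q.1 0 * q.2 1 - q.1 1 * q.2 0| ≤ α}.indicator (fun _ => (1 : ℝ≥0∞)) (s, t))
            * (E ∩ Ann2 i).indicator (fun _ => (1 : ℝ≥0∞)) s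
            * (F ∩ Ann2 j).indicator (fun _ => (1 : ℝ≥0∞)) t)
        ≤ ENNReal.ofReal (C * α) *
            min ((2 : ℝ≥0∞) ^ (i - j) * volume (F ∩ Ann2 j))
                ((2 : ℝ≥0∞) ^ (j - i) * volume (E ∩ Ann2 i)) := by
  refine ⟨8, by norm_num, fun α hα i j E F hE hF => ?_⟩
  change detPairing α (E ∩ Ann2 i) (F ∩ Ann2 j) ≤ _
  rw [mul_min]
  refine le_min ?_ (detPairing_ann2_le hα.le i j E F)
  rw [detPairing_comm α (hE.inter (measurableSet_ann2 i)) (hF.inter (measurableSet_ann2 j))]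
  exact detPairing_ann2_le hα.le j i F E
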